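/- arXiv:2310.00502 — 4 statements merged into one kernel-verified Lean document; each statement's English description precedes it below -/
import Mathlib

section
/- Let F ⊣ₛ G : D → C be a semiadjunction of semifunctors with unit η and counit ε. Then: (1) F is semifully faithful if and only if for every object C of C there exists a morphism ν_C : GFC → C with ν_C ∘ η_C = Id_C and η_C ∘ ν_C = GF(Id_C); (2) G is semifully faithful if and only if for every object D of D there exists a morphism γ_D : D → FGD with ε_D ∘ γ_D = Id_D and γ_D ∘ ε_D = FG(Id_D). -/
open CategoryTheory

universe v₁ v₂ v₃ v₄ u₁ u₂ u₃ u₄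

/-- A semifunctor between categories: it preserves composition of morphisms
but not necessarily identities. -/
structure Semifunctor (C : Type u₁) (D : Type u₂) [Category.{v₁} C] [Category.{v₂} D] where
  obj : C → D
  map : ∀ {X Y : C}, (X ⟶ Y) → (obj X ⟶ obj Y)
  map_comp : ∀ {X Y Z : C} (f : X ⟶ Y) (g : Y ⟶ Z), map (f ≫ g) = map f ≫ map g

namespace Semifunctor

variable {C : Type u₁} {D : Type u₂} {E : Type u₃} {C' : Type u₄}
variable [Category.{v₁} C] [Category.{v₂} D] [Category.{v₃} E] [Category.{v₄} C']

/-- Composition of semifunctors, in diagrammatic order: `F.comp G = G ∘ F`. -/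
def comp (F : Semifunctor C D) (G : Semifunctor D E) : Semifunctor C E where
  obj X := G.obj (F.obj X)
  map f := G.map (F.map f)
  map_comp f g := by
    show G.map (F.map (f ≫ g)) = G.map (F.map f) ≫ G.map (F.map g)
    rw [F.map_comp, G.map_comp]

/-- `α` is a natural transformation between the semifunctors `F` and `F'`:
`α_Y ∘ F(f) = F'(f) ∘ α_X` for every `f : X ⟶ Y`. -/
def IsNatural {F F' : Semifunctor C D} (α : ∀ X : C, F.obj X ⟶ F'.obj X) : Prop :=
  ∀ ⦃X Y : C⦄ (f : X ⟶ Y), F.map f ≫ α Y = α X ≫ F'.map f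

/-- `α` is a seminatural transformation: natural and `α_X ∘ F(Id_X) = α_X`. -/
def IsSeminatural {F F' : Semifunctor C D} (α : ∀ X : C, F.obj X ⟶ F'.obj X) : Prop :=
  IsNatural α ∧ ∀ X : C, F.map (𝟙 X) ≫ α X = α X

/-- A semifunctor is faithful if all its hom-maps are injective. -/
def Faithful (F : Semifunctor C D) : Prop :=
  ∀ ⦃X Y : C⦄ (f g : X ⟶ Y), F.map f = F.map g → f = g

/-- A semifunctor is full if all its hom-maps are surjective. -/
def Full (F : Semifunctor C D) : Prop :=
  ∀ ⦃X Y : C⦄ (g : F.obj X ⟶ F.obj Y), ∃ f : X ⟶ Y, F.map f = g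

/-- A semifunctor is semifull if for every `f : FX ⟶ FY` there is `g : X ⟶ Y`
with `F(g) = F(Id_Y) ∘ f ∘ F(Id_X)`. -/
def Semifull (F : Semifunctor C D) : Prop :=
  ∀ ⦃X Y : C⦄ (f : F.obj X ⟶ F.obj Y), ∃ g : X ⟶ Y,
    F.map g = F.map (𝟙 X) ≫ f ≫ F.map (𝟙 Y)

/-- A semifunctor is semifully faithful if it is faithful and semifull. -/
def SemifullyFaithful (F : Semifunctor C D) : Prop :=
  F.Faithful ∧ F.Semifull

/-- `P` is a natural transformation `Hom_D(F-,F-) → Hom_C(-,-)`. -/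
def IsHomNatural (F : Semifunctor C D)
    (P : ∀ X Y : C, (F.obj X ⟶ F.obj Y) → (X ⟶ Y)) : Prop :=
  ∀ (X Y Z T : C) (h : X ⟶ Y) (k : F.obj Y ⟶ F.obj Z) (l : Z ⟶ T),
    P X T (F.map h ≫ k ≫ F.map l) = h ≫ P Y Z k ≫ l

/-- A semifunctor is separable if the associated natural transformation `ℱ` has a
natural retraction `P` : `P(F(f)) = f`. -/
def Separable (F : Semifunctor C D) : Prop :=
  ∃ P : ∀ X Y : C, (F.obj X ⟶ F.obj Y) → (X ⟶ Y),
    F.IsHomNatural P ∧ ∀ (X Y : C) (f : X ⟶ Y), P X Y (F.map f) = f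

/-- A semifunctor is naturally semifull if there is a natural `P` with
`F(P(f)) = F(Id_Y) ∘ f ∘ F(Id_X)` for all `f : FX ⟶ FY`. -/
def NaturallySemifull (F : Semifunctor C D) : Prop :=
  ∃ P : ∀ X Y : C, (F.obj X ⟶ F.obj Y) → (X ⟶ Y),
    F.IsHomNatural P ∧
    ∀ (X Y : C) (f : F.obj X ⟶ F.obj Y),
      F.map (P X Y f) = F.map (𝟙 X) ≫ f ≫ F.map (𝟙 Y)

/-- A semifunctor is semiseparable if there is a natural `P` with
`F(P(F(f))) = F(f)` for all `f : X ⟶ Y`. -/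
def Semiseparable (F : Semifunctor C D) : Prop :=
  ∃ P : ∀ X Y : C, (F.obj X ⟶ F.obj Y) → (X ⟶ Y),
    F.IsHomNatural P ∧
    ∀ (X Y : C) (f : X ⟶ Y), F.map (P X Y (F.map f)) = F.map f

/-- `f : FC ⟶ F'C'` is an `(F_C, F'_{C'})`-semisplit-mono. -/
def IsSemisplitMonoAt (F : Semifunctor C D) (F' : Semifunctor C' D) (c : C) (c' : C')
    (f : F.obj c ⟶ F'.obj c') : Prop :=
  F.map (𝟙 c) ≫ f = f ∧ ∃ g : F'.obj c' ⟶ F.obj c,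
    f ≫ g = F.map (𝟙 c) ∧ F'.map (𝟙 c') ≫ g = g

/-- `f : FC ⟶ F'C'` is an `(F_C, F'_{C'})`-semisplit-epi. -/
def IsSemisplitEpiAt (F : Semifunctor C D) (F' : Semifunctor C' D) (c : C) (c' : C')
    (f : F.obj c ⟶ F'.obj c') : Prop :=
  f ≫ F'.map (𝟙 c') = f ∧ ∃ g : F'.obj c' ⟶ F.obj c,
    g ≫ f = F'.map (𝟙 c') ∧ g ≫ F.map (𝟙 c) = g

/-- `f : FC ⟶ F'C'` is an `(F_C, F'_{C'})`-semi-isomorphism. -/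
def IsSemiIsoAt (F : Semifunctor C D) (F' : Semifunctor C' D) (c : C) (c' : C')
    (f : F.obj c ⟶ F'.obj c') : Prop :=
  F.map (𝟙 c) ≫ f = f ∧ ∃ g : F'.obj c' ⟶ F.obj c,
    f ≫ g = F.map (𝟙 c) ∧ g ≫ f = F'.map (𝟙 c')

end Semifunctor

open Semifunctor

/-- A semiadjunction `F ⊣ₛ G`: seminatural unit and counit satisfying the
semitriangular identities `G(ε) ∘ ηG = G(Id)` and `εF ∘ F(η) = F(Id)`. -/
structure Semiadjunction {C : Type u₁} {D : Type u₂} [Category.{v₁} C] [Category.{v₂} D]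
    (F : Semifunctor C D) (G : Semifunctor D C) where
  unit : ∀ X : C, X ⟶ G.obj (F.obj X)
  counit : ∀ Y : D, F.obj (G.obj Y) ⟶ Y
  unit_natural : ∀ ⦃X Y : C⦄ (f : X ⟶ Y), f ≫ unit Y = unit X ≫ G.map (F.map f)
  counit_natural : ∀ ⦃X Y : D⦄ (g : X ⟶ Y), F.map (G.map g) ≫ counit Y = counit X ≫ g
  right_triangle : ∀ Y : D, unit (G.obj Y) ≫ G.map (counit Y) = G.map (𝟙 Y)
  left_triangle : ∀ X : C, F.map (unit X) ≫ counit (F.obj X) = F.map (𝟙 X)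

/-- The canonical semifunctor `E^e` attached to an idempotent seminatural
transformation `e : Id_C → Id_C`: identity on objects, `f ↦ f ∘ e_X = e_Y ∘ f`. -/
def canonicalSemifunctor {C : Type u₁} [Category.{v₁} C] (e : ∀ X : C, X ⟶ X)
    (hnat : ∀ ⦃X Y : C⦄ (f : X ⟶ Y), f ≫ e Y = e X ≫ f)
    (hid : ∀ X : C, e X ≫ e X = e X) : Semifunctor C C where
  obj X := X
  map {X Y} f := e X ≫ f
  map_comp {X Y Z} f g := by
    show e X ≫ f ≫ g = (e X ≫ f) ≫ e Y ≫ g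
    calc e X ≫ f ≫ g = (e X ≫ e X) ≫ f ≫ g := by rw [hid]
      _ = e X ≫ (e X ≫ f) ≫ g := by simp only [Category.assoc]
      _ = e X ≫ (f ≫ e Y) ≫ g := by rw [← hnat f]
      _ = (e X ≫ f) ≫ e Y ≫ g := by simp only [Category.assoc]

/-! The retraction `ν_X` of `η_X` is a semifull preimage of `ε_{FX}` under `F`: the triangle
identities turn `F(ν) = F(1) ≫ ε_{FX} ≫ F(1)` into both `F(η_X ≫ ν) = F(1_X)` and
`ν ≫ η_X = GF(1_X)`. Conversely, a split unit makes `F` faithful, and `η_X ≫ G(f) ≫ ν_Y` is a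
semifull preimage of `f`. The statement for `G` is the dual one, read off from the opposite
semiadjunction `Gᵒᵖ ⊣ₛ Fᵒᵖ`. -/

namespace Semifunctor

variable {C : Type u₁} {D : Type u₂} [Category.{v₁} C] [Category.{v₂} D]

lemma map_id_comp (F : Semifunctor C D) {X Y : C} (f : X ⟶ Y) :
    F.map (𝟙 X) ≫ F.map f = F.map f := by
  rw [← F.map_comp, Category.id_comp]

lemma map_comp_id (F : Semifunctor C D) {X Y : C} (f : X ⟶ Y) :
    F.map f ≫ F.map (𝟙 Y) = F.map f := by
  rw [← F.map_comp, Category.comp_id]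

protected def op (F : Semifunctor C D) : Semifunctor Cᵒᵖ Dᵒᵖ where
  obj X := Opposite.op (F.obj X.unop)
  map f := (F.map f.unop).op
  map_comp f g := by simp only [unop_comp, F.map_comp, op_comp]

lemma faithful_op_iff (F : Semifunctor C D) : F.op.Faithful ↔ F.Faithful :=
  ⟨fun h _ _ f g hfg => Quiver.Hom.op_inj (h f.op g.op (congrArg Quiver.Hom.op hfg)),
    fun h _ _ _ _ hfg => Quiver.Hom.unop_inj (h _ _ (Quiver.Hom.op_inj hfg))⟩

lemma semifull_op_iff (F : Semifunctor C D) : F.op.Semifull ↔ F.Semifull := by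
  constructor
  · intro h X Y f
    obtain ⟨g, hg⟩ := h (X := Opposite.op Y) (Y := Opposite.op X) f.op
    exact ⟨g.unop, (congrArg Quiver.Hom.unop hg).trans (Category.assoc _ _ _)⟩
  · intro h X Y f
    obtain ⟨g, hg⟩ := h f.unop
    exact ⟨g.op, Quiver.Hom.unop_inj (hg.trans (Category.assoc _ _ _).symm)⟩

lemma semifullyFaithful_op_iff (F : Semifunctor C D) :
    F.op.SemifullyFaithful ↔ F.SemifullyFaithful :=
  and_congr F.faithful_op_iff F.semifull_op_iff

end Semifunctor

namespace Semiadjunction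

variable {C : Type u₁} {D : Type u₂} [Category.{v₁} C] [Category.{v₂} D]
  {F : Semifunctor C D} {G : Semifunctor D C} (adj : Semiadjunction F G)

lemma unit_comp_map_map_id (X : C) : adj.unit X ≫ G.map (F.map (𝟙 X)) = adj.unit X := by
  rw [← adj.unit_natural, Category.id_comp]

protected def op : Semiadjunction G.op F.op where
  unit Y := (adj.counit Y.unop).op
  counit X := (adj.unit X.unop).op
  unit_natural _ _ f := Quiver.Hom.unop_inj (adj.counit_natural f.unop).symm
  counit_natural _ _ g := Quiver.Hom.unop_inj (adj.unit_natural g.unop).symm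
  right_triangle X := Quiver.Hom.unop_inj (adj.left_triangle X.unop)
  left_triangle Y := Quiver.Hom.unop_inj (adj.right_triangle Y.unop)

lemma faithful_of_isSplitMono_unit (h : ∀ X, IsSplitMono (adj.unit X)) : F.Faithful := by
  intro X Y f g hfg
  rw [← cancel_mono (adj.unit Y), adj.unit_natural, adj.unit_natural, hfg]

lemma comp_unit_eq_iff {X : C} (ν : G.obj (F.obj X) ⟶ X) :
    ν ≫ adj.unit X = G.map (F.map (𝟙 X)) ↔
      F.map ν = F.map (𝟙 _) ≫ adj.counit (F.obj X) ≫ F.map (𝟙 X) := by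
  constructor
  · intro h
    have hν : F.map ν = adj.counit (F.obj X) ≫ F.map (𝟙 X) := by
      calc F.map ν = F.map ν ≫ F.map (adj.unit X) ≫ adj.counit (F.obj X) := by
            rw [adj.left_triangle, F.map_comp_id]
        _ = F.map (G.map (F.map (𝟙 X))) ≫ adj.counit (F.obj X) := by
            rw [← Category.assoc, ← F.map_comp, h]
        _ = adj.counit (F.obj X) ≫ F.map (𝟙 X) := adj.counit_natural _
    rw [← hν, F.map_id_comp]
  · intro h
    calc ν ≫ adj.unit X = adj.unit _ ≫ G.map (F.map ν) := adj.unit_natural ν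
      _ = (adj.unit _ ≫ G.map (F.map (𝟙 _))) ≫ G.map (adj.counit (F.obj X)) ≫
            G.map (F.map (𝟙 X)) := by
          rw [h, G.map_comp, G.map_comp, Category.assoc]
      _ = G.map (F.map (𝟙 X)) := by
          rw [unit_comp_map_map_id, ← Category.assoc, adj.right_triangle, G.map_id_comp]

lemma map_unit_comp_eq_map_id {X : C} {ν : G.obj (F.obj X) ⟶ X}
    (h : F.map ν = F.map (𝟙 _) ≫ adj.counit (F.obj X) ≫ F.map (𝟙 X)) :
    F.map (adj.unit X ≫ ν) = F.map (𝟙 X) := by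
  rw [F.map_comp, h, ← Category.assoc, F.map_comp_id, ← Category.assoc, adj.left_triangle,
    F.map_id_comp]

lemma map_unit_comp_map_comp_eq {X Y : C} (f : F.obj X ⟶ F.obj Y) {ν : G.obj (F.obj Y) ⟶ Y}
    (h : F.map ν = F.map (𝟙 _) ≫ adj.counit (F.obj Y) ≫ F.map (𝟙 Y)) :
    F.map (adj.unit X ≫ G.map f ≫ ν) = F.map (𝟙 X) ≫ f ≫ F.map (𝟙 Y) := by
  rw [F.map_comp, F.map_comp, h, ← Category.assoc (F.map (G.map f)), F.map_comp_id,
    ← Category.assoc (F.map (G.map f)), adj.counit_natural, Category.assoc,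
    ← Category.assoc (F.map (adj.unit X)), adj.left_triangle]

theorem semifullyFaithful_left_iff :
    F.SemifullyFaithful ↔ ∀ X : C, ∃ ν : G.obj (F.obj X) ⟶ X,
      adj.unit X ≫ ν = 𝟙 X ∧ ν ≫ adj.unit X = G.map (F.map (𝟙 X)) := by
  constructor
  · rintro ⟨hfaithful, hsemifull⟩ X
    obtain ⟨ν, hν⟩ := hsemifull (adj.counit (F.obj X))
    exact ⟨ν, hfaithful _ _ (adj.map_unit_comp_eq_map_id hν), (adj.comp_unit_eq_iff ν).2 hν⟩
  · intro h
    choose ν hretraction hsection using h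
    refine ⟨adj.faithful_of_isSplitMono_unit fun X => .mk' ⟨ν X, hretraction X⟩, fun X Y f => ?_⟩
    exact ⟨_, adj.map_unit_comp_map_comp_eq f ((adj.comp_unit_eq_iff _).1 (hsection Y))⟩

theorem semifullyFaithful_right_iff :
    G.SemifullyFaithful ↔ ∀ Y : D, ∃ γ : Y ⟶ F.obj (G.obj Y),
      γ ≫ adj.counit Y = 𝟙 Y ∧ adj.counit Y ≫ γ = F.map (G.map (𝟙 Y)) := by
  rw [← G.semifullyFaithful_op_iff, adj.op.semifullyFaithful_left_iff,
    Opposite.op_surjective.forall]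
  refine forall_congr' fun Y => Quiver.Hom.opEquiv.symm.exists_congr_left.trans ?_
  exact exists_congr fun γ => and_congr Quiver.Hom.op_inj.eq_iff Quiver.Hom.op_inj.eq_iff

end Semiadjunction

/-- Characterization of semifully faithful semiadjoint semifunctors: `F` is
semifully faithful iff each `η_C` is a `(C,C)`-semi-isomorphism, and `G` is
semifully faithful iff each `ε_D` is a `(D,D)`-semi-isomorphism. -/
theorem semiadjunction_semifullyFaithful_char
    {C : Type u₁} {D : Type u₂} [Category.{v₁} C] [Category.{v₂} D]
    {F : Semifunctor C D} {G : Semifunctor D C} (adj : Semiadjunction F G) :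
    (F.SemifullyFaithful ↔ ∀ X : C, ∃ ν : G.obj (F.obj X) ⟶ X,
      adj.unit X ≫ ν = 𝟙 X ∧ ν ≫ adj.unit X = G.map (F.map (𝟙 X))) ∧
    (G.SemifullyFaithful ↔ ∀ Y : D, ∃ γ : Y ⟶ F.obj (G.obj Y),
      γ ≫ adj.counit Y = 𝟙 Y ∧ adj.counit Y ≫ γ = F.map (G.map (𝟙 Y))) :=
  ⟨adj.semifullyFaithful_left_iff, adj.semifullyFaithful_right_iff⟩
end

section
/- (Maschke-type Theorem) Let F : C → D be a separable semifunctor and let f : C → C' be a morphism in C. (1) If F(f) is an F_C-semisplit-mono (there exists g : FC' → FC with g ∘ F(f) = F(Id_C)), then f is a split monomorphism in C. (2) If F(f) is an F_{C'}-semisplit-epi (there exists g : FC' → FC with F(f) ∘ g = F(Id_{C'})), then f is a split epimorphism in C. (3) If F(f) is an (F_C,F_{C'})-semi-isomorphism, then f is an isomorphism in C. -/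
open CategoryTheory

universe v₁ v₂ v₃ v₄ u₁ u₂ u₃ u₄

open Semifunctor

/-!
Let `P` be the natural retraction of `F` on hom-sets. If `F(f) ≫ g = F(𝟙)`, then by naturality
`f ≫ P(g) = P(F(f) ≫ g ≫ F(𝟙)) = P(F(𝟙)) = 𝟙`, so `P(g)` is a retraction of `f`; dually
`F(𝟙) = g ≫ F(f)` makes `P(g)` a section. A morphism that is both split mono and split epi is
an isomorphism.
-/

namespace Semifunctor

variable {C : Type u₁} {D : Type u₂} [Category.{v₁} C] [Category.{v₂} D] (F : Semifunctor C D)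

theorem map_id_comp_map_id (X : C) : F.map (𝟙 X) ≫ F.map (𝟙 X) = F.map (𝟙 X) := by
  rw [← F.map_comp, Category.id_comp]

variable {F}

theorem Separable.isSplitMono_of_map_comp_eq (hF : F.Separable) {c c' : C} {f : c ⟶ c'}
    {g : F.obj c' ⟶ F.obj c} (hg : F.map f ≫ g = F.map (𝟙 c)) : IsSplitMono f := by
  obtain ⟨P, hP_natural, hP_retraction⟩ := hF
  refine IsSplitMono.mk' ⟨P c' c g, ?_⟩
  calc f ≫ P c' c g = f ≫ P c' c g ≫ 𝟙 c := by rw [Category.comp_id]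
    _ = P c c (F.map f ≫ g ≫ F.map (𝟙 c)) := (hP_natural c c' c c f g (𝟙 c)).symm
    _ = 𝟙 c := by rw [← Category.assoc, hg, map_id_comp_map_id, hP_retraction]

theorem Separable.isSplitEpi_of_comp_map_eq (hF : F.Separable) {c c' : C} {f : c ⟶ c'}
    {g : F.obj c' ⟶ F.obj c} (hg : g ≫ F.map f = F.map (𝟙 c')) : IsSplitEpi f := by
  obtain ⟨P, hP_natural, hP_retraction⟩ := hF
  refine IsSplitEpi.mk' ⟨P c' c g, ?_⟩
  calc P c' c g ≫ f = 𝟙 c' ≫ P c' c g ≫ f := by rw [Category.id_comp]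
    _ = P c' c' (F.map (𝟙 c') ≫ g ≫ F.map f) := (hP_natural c' c' c c' (𝟙 c') g f).symm
    _ = 𝟙 c' := by rw [hg, map_id_comp_map_id, hP_retraction]

end Semifunctor

/-- Maschke-type Theorem for separable semifunctors: if `F(f)` is an `F_C`-semisplit-mono
(resp. `F_{C'}`-semisplit-epi, `(F_C,F_{C'})`-semi-isomorphism), then `f` is a split
monomorphism (resp. split epimorphism, isomorphism). -/
theorem maschke_for_separable_semifunctors
    {C : Type u₁} {D : Type u₂} [Category.{v₁} C] [Category.{v₂} D]
    (F : Semifunctor C D) (hF : F.Separable) {c c' : C} (f : c ⟶ c') :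
    ((∃ g : F.obj c' ⟶ F.obj c, F.map f ≫ g = F.map (𝟙 c)) →
      ∃ r : c' ⟶ c, f ≫ r = 𝟙 c) ∧
    ((∃ g : F.obj c' ⟶ F.obj c, g ≫ F.map f = F.map (𝟙 c')) →
      ∃ s : c' ⟶ c, s ≫ f = 𝟙 c') ∧
    (Semifunctor.IsSemiIsoAt F F c c' (F.map f) → IsIso f) := by
  refine ⟨fun ⟨g, hg⟩ => ?_, fun ⟨g, hg⟩ => ?_, fun ⟨_, g, hfg, hgf⟩ => ?_⟩
  · have := hF.isSplitMono_of_map_comp_eq hg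
    exact ⟨retraction f, IsSplitMono.id f⟩
  · have := hF.isSplitEpi_of_comp_map_eq hg
    exact ⟨section_ f, IsSplitEpi.id f⟩
  · have := hF.isSplitMono_of_map_comp_eq hfg
    have := hF.isSplitEpi_of_comp_map_eq hgf
    exact isIso_of_mono_of_isSplitEpi f
end

section
/- (Rafael-type Theorem for separable semifunctors) Let F ⊣ₛ G : D → C be a semiadjunction of semifunctors with unit η and counit ε. Then: (1) F is separable if and only if there exists a seminatural transformation ν : GF → Id_C with ν_X ∘ η_X = Id_X for all objects X of C; (2) G is separable if and only if there exists a seminatural transformation γ : Id_D → FG with ε_D ∘ γ_D = Id_D for all objects D of D. -/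
open CategoryTheory

universe v₁ v₂ v₃ v₄ u₁ u₂ u₃ u₄

open Semifunctor

/-! A natural retraction `P` of `F`'s hom-maps yields `ν_X = P(ε_{FX})`, and conversely
`P(k) = ν_Y ∘ G(k) ∘ η_X`; dually, a natural retraction `P` of `G`'s hom-maps yields
`γ_Y = P(η_{GY})`, and conversely `P(k) = ε_Y ∘ F(k) ∘ γ_X`. In both directions the
semitriangular identities turn the splitting condition into `P(F(𝟙)) = 𝟙`, resp. `P(G(𝟙)) = 𝟙`. -/

namespace Semifunctor

variable {C : Type u₁} {D : Type u₂} [Category.{v₁} C] [Category.{v₂} D]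

protected def id (C : Type u₁) [Category.{v₁} C] : Semifunctor C C where
  obj X := X
  map f := f
  map_comp _ _ := rfl

theorem IsNatural.isSeminatural {F F' : Semifunctor C D} {α : ∀ X : C, F.obj X ⟶ F'.obj X}
    (hα : IsNatural α) (hF' : ∀ X : C, F'.map (𝟙 X) = 𝟙 (F'.obj X)) : IsSeminatural α :=
  ⟨hα, fun X => by rw [hα, hF', Category.comp_id]⟩

namespace IsHomNatural

variable {F : Semifunctor C D} {P : ∀ X Y : C, (F.obj X ⟶ F.obj Y) → (X ⟶ Y)}

theorem map_comp_left (hP : F.IsHomNatural P) {X Y Z : C} (h : X ⟶ Y)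
    (k : F.obj Y ⟶ F.obj Z) : P X Z (F.map h ≫ k) = h ≫ P Y Z k :=
  calc P X Z (F.map h ≫ k) = 𝟙 X ≫ P X Z (F.map h ≫ k) ≫ 𝟙 Z := by simp
    _ = P X Z (F.map (𝟙 X) ≫ (F.map h ≫ k) ≫ F.map (𝟙 Z)) := (hP ..).symm
    _ = P X Z (F.map h ≫ k ≫ F.map (𝟙 Z)) := by
      rw [Category.assoc, ← Category.assoc (F.map (𝟙 X)), ← F.map_comp, Category.id_comp]
    _ = h ≫ P Y Z k := by simpa using hP X Y Z Z h k (𝟙 Z)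

theorem comp_map_right (hP : F.IsHomNatural P) {X Y Z : C} (k : F.obj X ⟶ F.obj Y)
    (l : Y ⟶ Z) : P X Z (k ≫ F.map l) = P X Y k ≫ l :=
  calc P X Z (k ≫ F.map l) = 𝟙 X ≫ P X Z (k ≫ F.map l) ≫ 𝟙 Z := by simp
    _ = P X Z (F.map (𝟙 X) ≫ (k ≫ F.map l) ≫ F.map (𝟙 Z)) := (hP ..).symm
    _ = P X Z (F.map (𝟙 X) ≫ k ≫ F.map l) := by
      rw [Category.assoc k, ← F.map_comp, Category.comp_id]
    _ = P X Y k ≫ l := by simpa using hP X X Y Z (𝟙 X) k l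

end IsHomNatural

end Semifunctor

namespace Semiadjunction

variable {C : Type u₁} {D : Type u₂} [Category.{v₁} C] [Category.{v₂} D]
  {F : Semifunctor C D} {G : Semifunctor D C}

theorem separable_left_iff_exists_unit_retraction (adj : Semiadjunction F G) :
    F.Separable ↔ ∃ ν : ∀ X : C, G.obj (F.obj X) ⟶ X,
      IsSeminatural (F := F.comp G) (F' := Semifunctor.id C) ν ∧
      ∀ X : C, adj.unit X ≫ ν X = 𝟙 X := by
  constructor
  · rintro ⟨P, hP, hPF⟩
    have hν : ∀ ⦃X Y : C⦄ (f : X ⟶ Y), G.map (F.map f) ≫ P _ Y (adj.counit (F.obj Y)) =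
        P _ X (adj.counit (F.obj X)) ≫ f := fun X Y f =>
      calc G.map (F.map f) ≫ P _ Y (adj.counit (F.obj Y))
          = P _ Y (F.map (G.map (F.map f)) ≫ adj.counit (F.obj Y)) := (hP.map_comp_left _ _).symm
        _ = P _ Y (adj.counit (F.obj X) ≫ F.map f) := by rw [adj.counit_natural]
        _ = P _ X (adj.counit (F.obj X)) ≫ f := hP.comp_map_right _ _
    refine ⟨_, IsNatural.isSeminatural hν fun _ => rfl, fun X => ?_⟩
    rw [← hP.map_comp_left, adj.left_triangle, hPF]
  · rintro ⟨ν, ⟨hν, -⟩, hsplit⟩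
    replace hν : ∀ ⦃X Y : C⦄ (f : X ⟶ Y), G.map (F.map f) ≫ ν Y = ν X ≫ f := hν
    refine ⟨fun X Y k => adj.unit X ≫ G.map k ≫ ν Y, fun X Y Z T h k l => ?_, fun X Y f => ?_⟩
    · simp only [G.map_comp, Category.assoc]
      rw [← reassoc_of% (adj.unit_natural h), hν l]
    · dsimp only
      rw [hν f, reassoc_of% (hsplit X)]

theorem separable_right_iff_exists_counit_section (adj : Semiadjunction F G) :
    G.Separable ↔ ∃ γ : ∀ Y : D, Y ⟶ F.obj (G.obj Y),
      IsSeminatural (F := Semifunctor.id D) (F' := G.comp F) γ ∧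
      ∀ Y : D, γ Y ≫ adj.counit Y = 𝟙 Y := by
  constructor
  · rintro ⟨P, hP, hPG⟩
    have hγ : ∀ ⦃X Y : D⦄ (g : X ⟶ Y), g ≫ P Y _ (adj.unit (G.obj Y)) =
        P X _ (adj.unit (G.obj X)) ≫ F.map (G.map g) := fun X Y g =>
      calc g ≫ P Y _ (adj.unit (G.obj Y))
          = P X _ (G.map g ≫ adj.unit (G.obj Y)) := (hP.map_comp_left _ _).symm
        _ = P X _ (adj.unit (G.obj X) ≫ G.map (F.map (G.map g))) := by rw [adj.unit_natural]
        _ = P X _ (adj.unit (G.obj X)) ≫ F.map (G.map g) := hP.comp_map_right _ _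
    refine ⟨_, ⟨hγ, fun _ => Category.id_comp _⟩, fun Y => ?_⟩
    rw [← hP.comp_map_right, adj.right_triangle, hPG]
  · rintro ⟨γ, ⟨hγ, -⟩, hsplit⟩
    replace hγ : ∀ ⦃X Y : D⦄ (g : X ⟶ Y), g ≫ γ Y = γ X ≫ F.map (G.map g) := hγ
    refine ⟨fun X Y k => γ X ≫ F.map k ≫ adj.counit Y, fun X Y Z T h k l => ?_, fun X Y g => ?_⟩
    · simp only [F.map_comp, Category.assoc]
      rw [adj.counit_natural l, ← reassoc_of% (hγ h)]
    · dsimp only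
      rw [← reassoc_of% (hγ g), hsplit Y, Category.comp_id]

end Semiadjunction

/-- Rafael-type Theorem for separable semifunctors: given a semiadjunction `F ⊣ₛ G`,
`F` is separable iff the unit is a natural split-mono and `G` is separable iff the
counit is a natural split-epi. -/
theorem rafael_separable_semifunctors
    {C : Type u₁} {D : Type u₂} [Category.{v₁} C] [Category.{v₂} D]
    {F : Semifunctor C D} {G : Semifunctor D C} (adj : Semiadjunction F G) :
    (F.Separable ↔ ∃ ν : ∀ X : C, G.obj (F.obj X) ⟶ X,
      (∀ ⦃X Y : C⦄ (f : X ⟶ Y), G.map (F.map f) ≫ ν Y = ν X ≫ f) ∧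
      (∀ X : C, G.map (F.map (𝟙 X)) ≫ ν X = ν X) ∧
      (∀ X : C, adj.unit X ≫ ν X = 𝟙 X)) ∧
    (G.Separable ↔ ∃ γ : ∀ Y : D, Y ⟶ F.obj (G.obj Y),
      (∀ ⦃X Y : D⦄ (g : X ⟶ Y), g ≫ γ Y = γ X ≫ F.map (G.map g)) ∧
      (∀ Y : D, 𝟙 Y ≫ γ Y = γ Y) ∧
      (∀ Y : D, γ Y ≫ adj.counit Y = 𝟙 Y)) := by
  simp only [← and_assoc]
  exact ⟨adj.separable_left_iff_exists_unit_retraction,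
    adj.separable_right_iff_exists_counit_section⟩
end

section
/- Let F : C → D be a semiseparable semifunctor. Then there is a unique idempotent natural transformation e : Id_C → Id_C such that F(e_X) = F(Id_X) for all X and with the universal property: for morphisms f, g : X → Y in C, F(f) = F(g) if and only if e_Y ∘ f = e_Y ∘ g. Moreover, e_X = Id_X for all X if and only if F is separable. -/
open CategoryTheory

universe v₁ v₂ v₃ v₄ u₁ u₂ u₃ u₄

open Semifunctor

/-! If `P` witnesses semiseparability of `F`, then `e_X = P(F(Id_X))` is the associated
idempotent: naturality of `P` gives `P(F(f)) = f ∘ e_X = e_Y ∘ f`, and `F(e_X) = F(Id_X)`, so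
`F(f) = F(g)` iff `e ∘ f = e ∘ g`. In particular `e = Id` exactly when `F` is faithful, and a
semiseparable semifunctor is separable exactly when it is faithful. -/

namespace Semifunctor

variable {C : Type u₁} {D : Type u₂} [Category.{v₁} C] [Category.{v₂} D]

def IsAssociatedIdempotent (F : Semifunctor C D) (e : ∀ X : C, X ⟶ X) : Prop :=
  (∀ ⦃X Y : C⦄ (f : X ⟶ Y), f ≫ e Y = e X ≫ f) ∧
  (∀ X : C, e X ≫ e X = e X) ∧
  (∀ X : C, F.map (e X) = F.map (𝟙 X)) ∧
  (∀ (X Y : C) (f g : X ⟶ Y), F.map f = F.map g ↔ f ≫ e Y = g ≫ e Y)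

variable {F : Semifunctor C D}

lemma map_comp_eq_map_of_map_eq_map_id {X Y : C} {e : Y ⟶ Y} (he : F.map e = F.map (𝟙 Y))
    (f : X ⟶ Y) : F.map (f ≫ e) = F.map f := by
  rw [F.map_comp, he, ← F.map_comp, Category.comp_id]

namespace IsHomNatural

variable {P : ∀ X Y : C, (F.obj X ⟶ F.obj Y) → (X ⟶ Y)}

lemma apply_map_eq_comp (hP : F.IsHomNatural P) {X Y : C} (f : X ⟶ Y) :
    P X Y (F.map f) = f ≫ P Y Y (F.map (𝟙 Y)) := by
  simpa [← F.map_comp] using hP X Y Y Y f (F.map (𝟙 Y)) (𝟙 Y)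

lemma apply_map_eq_comp' (hP : F.IsHomNatural P) {X Y : C} (f : X ⟶ Y) :
    P X Y (F.map f) = P X X (F.map (𝟙 X)) ≫ f := by
  simpa [← F.map_comp] using hP X X X Y (𝟙 X) (F.map (𝟙 X)) f

lemma isAssociatedIdempotent (hP : F.IsHomNatural P)
    (hPF : ∀ (X Y : C) (f : X ⟶ Y), F.map (P X Y (F.map f)) = F.map f) :
    F.IsAssociatedIdempotent fun X => P X X (F.map (𝟙 X)) := by
  refine ⟨fun X Y f => by rw [← hP.apply_map_eq_comp, hP.apply_map_eq_comp'], fun X => ?_,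
    fun X => hPF X X (𝟙 X), fun X Y f g => ⟨fun h => ?_, fun h => ?_⟩⟩
  · rw [← hP.apply_map_eq_comp', hPF]
  · rw [← hP.apply_map_eq_comp, ← hP.apply_map_eq_comp, h]
  · rw [← map_comp_eq_map_of_map_eq_map_id (hPF Y Y (𝟙 Y)) f, h,
      map_comp_eq_map_of_map_eq_map_id (hPF Y Y (𝟙 Y)) g]

end IsHomNatural

namespace IsAssociatedIdempotent

variable {e : ∀ X : C, X ⟶ X}

lemma ext (he : F.IsAssociatedIdempotent e) {e' : ∀ X : C, X ⟶ X}
    (he' : F.IsAssociatedIdempotent e') : e = e' := by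
  obtain ⟨hnat, -, hmap, huniv⟩ := he
  obtain ⟨-, -, hmap', huniv'⟩ := he'
  funext X
  have h₁ : e' X ≫ e X = e X := by simpa using (huniv X X _ _).1 (hmap' X)
  have h₂ : e X ≫ e' X = e' X := by simpa using (huniv' X X _ _).1 (hmap X)
  rw [← h₁, hnat, h₂]

lemma eq_id_iff_faithful (he : F.IsAssociatedIdempotent e) :
    (∀ X : C, e X = 𝟙 X) ↔ F.Faithful := by
  obtain ⟨-, -, hmap, huniv⟩ := he
  refine ⟨fun h X Y f g hfg => ?_, fun h X => h _ _ (hmap X)⟩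
  simpa [h] using (huniv X Y f g).1 hfg

end IsAssociatedIdempotent

lemma Separable.faithful (hF : F.Separable) : F.Faithful := by
  obtain ⟨P, -, hPF⟩ := hF
  intro X Y f g h
  rw [← hPF X Y f, h, hPF]

lemma Semiseparable.separable_iff_faithful (hF : F.Semiseparable) : F.Separable ↔ F.Faithful := by
  obtain ⟨P, hP, hPF⟩ := hF
  exact ⟨Separable.faithful, fun h => ⟨P, hP, fun X Y f => h _ _ (hPF X Y f)⟩⟩

lemma Semiseparable.existsUnique_isAssociatedIdempotent (hF : F.Semiseparable) :
    ∃! e : ∀ X : C, X ⟶ X, F.IsAssociatedIdempotent e := by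
  obtain ⟨P, hP, hPF⟩ := hF
  exact ⟨_, hP.isAssociatedIdempotent hPF, fun e he => he.ext (hP.isAssociatedIdempotent hPF)⟩

end Semifunctor

/-- A semiseparable semifunctor has a unique associated idempotent natural
transformation `e : Id_C → Id_C` with `F(e_X) = F(Id_X)` and the universal property
`F(f) = F(g) ↔ e_Y ∘ f = e_Y ∘ g`; moreover `e = Id` iff `F` is separable. -/
theorem semiseparable_associated_idempotent
    {C : Type u₁} {D : Type u₂} [Category.{v₁} C] [Category.{v₂} D]
    (F : Semifunctor C D) (hF : F.Semiseparable) :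
    (∃! e : ∀ X : C, X ⟶ X,
      (∀ ⦃X Y : C⦄ (f : X ⟶ Y), f ≫ e Y = e X ≫ f) ∧
      (∀ X : C, e X ≫ e X = e X) ∧
      (∀ X : C, F.map (e X) = F.map (𝟙 X)) ∧
      (∀ (X Y : C) (f g : X ⟶ Y), F.map f = F.map g ↔ f ≫ e Y = g ≫ e Y)) ∧
    (∀ e : ∀ X : C, X ⟶ X,
      ((∀ ⦃X Y : C⦄ (f : X ⟶ Y), f ≫ e Y = e X ≫ f) ∧
       (∀ X : C, e X ≫ e X = e X) ∧
       (∀ X : C, F.map (e X) = F.map (𝟙 X)) ∧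
       (∀ (X Y : C) (f g : X ⟶ Y), F.map f = F.map g ↔ f ≫ e Y = g ≫ e Y)) →
      ((∀ X : C, e X = 𝟙 X) ↔ F.Separable)) :=
  ⟨hF.existsUnique_isAssociatedIdempotent, fun _ he =>
    (IsAssociatedIdempotent.eq_id_iff_faithful he).trans hF.separable_iff_faithful.symm⟩
end
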